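/- Let (X,d) be a metric space, let φ : X → ℝ∪{−∞} be c-concave, and let B ⊂ X be a bounded set such that ∂^cφ(x) ∩ B ≠ ∅ for every x ∈ X. Then φ is real-valued and for all x, x' ∈ X one has φ(x) − φ(x') ≤ d(x,x') · ( (d(x,B)+d(x',B))/2 + diam(B) ). Consequently φ is Lipschitz on every bounded subset of X and its local Lipschitz constant satisfies lip(φ)(x) ≤ d(x,B) + diam(B) for every x ∈ X. -/
import Mathlib


open Filter MeasureTheory Set Topology

/-- The `c`-transform for the cost `c(x,y) = d²(x,y)/2`:
`φᶜ(y) = inf_x ( d²(x,y)/2 - φ(x) )`, with values in `EReal`. -/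
noncomputable def cTransform {X : Type*} [MetricSpace X] (φ : X → EReal) (y : X) : EReal :=
  ⨅ x : X, ((dist x y ^ 2 / 2 : ℝ) : EReal) - φ x

/-- A function `φ : X → ℝ ∪ {-∞}` is `c`-concave if it is not identically `-∞` and
`φ = ψᶜ` for some `ψ : X → ℝ ∪ {-∞}`. -/
def CConcave {X : Type*} [MetricSpace X] (φ : X → EReal) : Prop :=
  (∃ x, φ x ≠ ⊥) ∧ (∀ x, φ x ≠ ⊤) ∧ ∃ ψ : X → EReal, (∀ x, ψ x ≠ ⊤) ∧ φ = cTransform ψ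

/-- The `c`-superdifferential of `φ` at `x`: the set of `y` with `φ(x) + φᶜ(y) = d²(x,y)/2`. -/
def cSuperdiff {X : Type*} [MetricSpace X] (φ : X → EReal) (x : X) : Set X :=
  {y | φ x + cTransform φ y = ((dist x y ^ 2 / 2 : ℝ) : EReal)}

/-- Local Lipschitz constant `lip f (x) = limsup_{y → x} |f y - f x| / d(y,x)`
(equal to `0` at isolated points, by the junk value conventions of `Real.sInf`). -/
noncomputable def locLip {X : Type*} [MetricSpace X] (f : X → ℝ) (x : X) : ℝ :=
  Filter.limsup (fun y => |f y - f x| / dist y x) (𝓝[≠] x)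

/-- Let `φ` be `c`-concave and `B` bounded with `∂ᶜφ(x) ∩ B ≠ ∅` for every `x`.
Then `φ` is real-valued, satisfies
`φ(x) - φ(x') ≤ d(x,x') ((d(x,B)+d(x',B))/2 + diam B)`, is Lipschitz on every bounded subset,
and its local Lipschitz constant satisfies `lip φ (x) ≤ d(x,B) + diam B`. -/
theorem stmt7 {X : Type*} [MetricSpace X] (φ : X → EReal) (hφ : CConcave φ)
    (B : Set X) (hB : Bornology.IsBounded B)
    (hsup : ∀ x : X, (cSuperdiff φ x ∩ B).Nonempty) :
    ∃ ψ : X → ℝ, (∀ x, φ x = (ψ x : EReal)) ∧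
      (∀ x x' : X, ψ x - ψ x' ≤
        dist x x' * ((Metric.infDist x B + Metric.infDist x' B) / 2 + Metric.diam B)) ∧
      (∀ S : Set X, Bornology.IsBounded S → ∃ K : NNReal, LipschitzOnWith K ψ S) ∧
      (∀ x : X, locLip ψ x ≤ Metric.infDist x B + Metric.diam B) := by
  classical
  obtain ⟨hne, hnt, _⟩ := hφ
  -- φ is real-valued
  have hreal : ∀ x : X, φ x ≠ ⊥ := by
    intro x hbot
    obtain ⟨y, hy, -⟩ := hsup x
    simp only [cSuperdiff, Set.mem_setOf_eq] at hy
    rw [hbot, EReal.bot_add] at hy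
    exact (EReal.bot_ne_coe _) hy
  set ψ : X → ℝ := fun x => (φ x).toReal with hψdef
  have hψ : ∀ x, φ x = (ψ x : EReal) := fun x =>
    (EReal.coe_toReal (hnt x) (hreal x)).symm
  -- the cTransform is real at superdifferential points, with the key identity
  have hct : ∀ x y : X, y ∈ cSuperdiff φ x →
      ∃ t : ℝ, cTransform φ y = (t : EReal) ∧ ψ x + t = dist x y ^ 2 / 2 := by
    intro x y hy
    simp only [cSuperdiff, Set.mem_setOf_eq] at hy
    rw [hψ x] at hy
    have hnb : cTransform φ y ≠ ⊥ := by
      intro h; rw [h] at hy; simp at hy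
    have hntt : cTransform φ y ≠ ⊤ := by
      intro h; rw [h] at hy
      rw [EReal.add_top_of_ne_bot (by exact EReal.coe_ne_bot _)] at hy
      exact (EReal.top_ne_coe _) hy
    refine ⟨(cTransform φ y).toReal, (EReal.coe_toReal hntt hnb).symm, ?_⟩
    rw [← (EReal.coe_toReal hntt hnb)] at hy
    rw [← EReal.coe_add] at hy
    exact_mod_cast hy
  -- the key two-point inequality
  have key : ∀ x x' : X, ψ x - ψ x' ≤
      dist x x' * ((Metric.infDist x B + Metric.infDist x' B) / 2 + Metric.diam B) := by
    intro x x'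
    obtain ⟨y, hy, hyB⟩ := hsup x'
    obtain ⟨t, hct', heq⟩ := hct x' y hy
    -- cTransform φ y ≤ d(x,y)²/2 - φ x
    have hle : (t : EReal) ≤ ((dist x y ^ 2 / 2 : ℝ) : EReal) - φ x := by
      rw [← hct']
      exact iInf_le _ x
    rw [hψ x, ← EReal.coe_sub] at hle
    have hle' : ψ x + t ≤ dist x y ^ 2 / 2 := by
      have := EReal.coe_le_coe_iff.mp hle
      linarith
    have h1 : ψ x - ψ x' ≤ dist x y ^ 2 / 2 - dist x' y ^ 2 / 2 := by linarith
    have h2 : dist x y ^ 2 / 2 - dist x' y ^ 2 / 2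
        = (dist x y - dist x' y) * ((dist x y + dist x' y) / 2) := by ring
    have h3 : dist x y - dist x' y ≤ dist x x' := by
      have := abs_dist_sub_le x x' y
      have := abs_le.mp this
      linarith [this.2]
    have h4 : dist x y ≤ Metric.infDist x B + Metric.diam B :=
      Metric.dist_le_infDist_add_diam hB hyB
    have h5 : dist x' y ≤ Metric.infDist x' B + Metric.diam B :=
      Metric.dist_le_infDist_add_diam hB hyB
    have hd0 : (0:ℝ) ≤ dist x y + dist x' y := by positivity
    calc ψ x - ψ x' ≤ (dist x y - dist x' y) * ((dist x y + dist x' y) / 2) := by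
          rw [← h2]; exact h1
      _ ≤ dist x x' * ((dist x y + dist x' y) / 2) := by
          apply mul_le_mul_of_nonneg_right h3; linarith
      _ ≤ dist x x' * ((Metric.infDist x B + Metric.infDist x' B) / 2 + Metric.diam B) := by
          apply mul_le_mul_of_nonneg_left _ dist_nonneg
          linarith [Metric.diam_nonneg (s := B)]
  refine ⟨ψ, hψ, key, ?_, ?_⟩
  · -- Lipschitz on bounded sets
    intro S hS
    rcases S.eq_empty_or_nonempty with rfl | ⟨s₀, hs₀⟩
    · exact ⟨0, by simp [LipschitzOnWith]⟩
    set M : ℝ := Metric.diam S + Metric.infDist s₀ B + Metric.diam B with hM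
    refine ⟨M.toNNReal, LipschitzOnWith.of_dist_le_mul ?_⟩
    intro x hx x' hx'
    have hbound : ∀ z ∈ S, Metric.infDist z B ≤ Metric.diam S + Metric.infDist s₀ B := by
      intro z hz
      calc Metric.infDist z B ≤ Metric.infDist s₀ B + dist z s₀ :=
            Metric.infDist_le_infDist_add_dist
        _ ≤ Metric.infDist s₀ B + Metric.diam S := by
            linarith [Metric.dist_le_diam_of_mem hS hz hs₀]
        _ = _ := by ring
    have habs : ∀ a b : X, a ∈ S → b ∈ S → ψ a - ψ b ≤ dist a b * M := by
      intro a b ha hb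
      calc ψ a - ψ b ≤ dist a b * ((Metric.infDist a B + Metric.infDist b B) / 2
            + Metric.diam B) := key a b
        _ ≤ dist a b * M := by
            apply mul_le_mul_of_nonneg_left _ dist_nonneg
            have := hbound a ha; have := hbound b hb
            rw [hM]; linarith
    have hM0 : 0 ≤ M := by
      have := Metric.diam_nonneg (s := S)
      have := Metric.diam_nonneg (s := B)
      have := Metric.infDist_nonneg (x := s₀) (s := B)
      rw [hM]; linarith
    rw [Real.dist_eq, Real.coe_toNNReal', max_eq_left hM0]
    refine abs_sub_le_iff.mpr ⟨?_, ?_⟩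
    · calc ψ x - ψ x' ≤ dist x x' * M := habs x x' hx hx'
        _ = M * dist x x' := mul_comm _ _
    · calc ψ x' - ψ x ≤ dist x' x * M := habs x' x hx' hx
        _ = M * dist x x' := by rw [dist_comm]; ring
  · -- local Lipschitz constant
    intro x
    set L : ℝ := Metric.infDist x B + Metric.diam B with hL
    have hL0 : 0 ≤ L := add_nonneg Metric.infDist_nonneg Metric.diam_nonneg
    unfold locLip
    rcases eq_or_neBot (𝓝[≠] x) with hbot | hnb
    · have heq : Filter.limsup (fun y => |ψ y - ψ x| / dist y x) (𝓝[≠] x) = sInf Set.univ := by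
        rw [hbot, Filter.limsup_eq]
        simp
      rw [heq, csInf_of_not_bddBelow, Real.sInf_empty]
      · exact hL0
      · rintro ⟨b, hb⟩
        have hble := hb (Set.mem_univ (b - 1))
        linarith
    · -- non-isolated point
      have hgh : ∀ᶠ y in 𝓝[≠] x, |ψ y - ψ x| / dist y x ≤ L + dist y x / 2 := by
        filter_upwards [self_mem_nhdsWithin] with y hy
        have hd : 0 < dist y x := dist_pos.mpr hy
        rw [div_le_iff₀ hd]
        have hb1 : ψ y - ψ x ≤ dist y x * ((Metric.infDist y B + Metric.infDist x B) / 2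
            + Metric.diam B) := key y x
        have hb2 : ψ x - ψ y ≤ dist x y * ((Metric.infDist x B + Metric.infDist y B) / 2
            + Metric.diam B) := key x y
        have hinf : Metric.infDist y B ≤ Metric.infDist x B + dist y x :=
          Metric.infDist_le_infDist_add_dist
        have hdxy : dist x y = dist y x := dist_comm x y
        have hfac : (Metric.infDist y B + Metric.infDist x B) / 2 + Metric.diam B
            ≤ L + dist y x / 2 := by rw [hL]; linarith
        rw [abs_sub_le_iff]
        constructor
        · calc ψ y - ψ x ≤ dist y x * ((Metric.infDist y B + Metric.infDist x B) / 2
              + Metric.diam B) := hb1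
            _ ≤ (L + dist y x / 2) * dist y x := by
              rw [mul_comm]; exact mul_le_mul_of_nonneg_right hfac dist_nonneg
        · calc ψ x - ψ y ≤ dist y x * ((Metric.infDist y B + Metric.infDist x B) / 2
              + Metric.diam B) := by rw [← hdxy]; convert hb2 using 3; ring
            _ ≤ (L + dist y x / 2) * dist y x := by
              rw [mul_comm]; exact mul_le_mul_of_nonneg_right hfac dist_nonneg
      have htend : Filter.Tendsto (fun y => L + dist y x / 2) (𝓝[≠] x) (𝓝 L) := by
        have h1 : Filter.Tendsto (fun y : X => dist y x) (𝓝[≠] x) (𝓝 0) := by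
          have : Filter.Tendsto (fun y : X => dist y x) (𝓝 x) (𝓝 (dist x x)) :=
            (continuous_id.dist continuous_const).tendsto x
          rw [dist_self] at this
          exact this.mono_left nhdsWithin_le_nhds
        have := h1.div_const 2
        rw [zero_div] at this
        have := this.const_add L
        simpa using this
      have hlimsuph : Filter.limsup (fun y => L + dist y x / 2) (𝓝[≠] x) = L :=
        htend.limsup_eq
      calc Filter.limsup (fun y => |ψ y - ψ x| / dist y x) (𝓝[≠] x)
          ≤ Filter.limsup (fun y => L + dist y x / 2) (𝓝[≠] x) := by
            refine Filter.limsup_le_limsup hgh ?_ ?_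
            · refine Filter.isCoboundedUnder_le_of_eventually_le _ (x := 0) ?_
              filter_upwards with y
              positivity
            · exact htend.isBoundedUnder_le
        _ = L := hlimsuph
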